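/- Let R be a Γ-graded integral domain and ⋆ a homogeneous star operation on R. Then every maximal (e(⋆_f))_f-ideal M of R with M ∩ H ≠ ∅ is homogeneous, i.e., M = C(M). -/

import Mathlib

open FractionalIdeal
open scoped Classical

section Setup

variable {Γ : Type*} [AddCommMonoid Γ] [LinearOrder Γ] [IsOrderedCancelAddMonoid Γ] [DecidableEq Γ]
  {R : Type*} [CommRing R] [IsDomain R]
  (𝒜 : Γ → AddSubgroup R) [GradedRing 𝒜]
  (K : Type*) [Field K] [Algebra R K] [IsFractionRing R K]

/-- The integral ideal corresponding to a fractional ideal contained in `R`. -/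
def idealOf (J : FractionalIdeal (nonZeroDivisors R) K) : Ideal R :=
  (J : Submodule R K).comap (Algebra.linearMap R K)

/-- An integral ideal is homogeneous if it contains all homogeneous components of its elements. -/
def IsHomIdeal (I : Ideal R) : Prop := ∀ f ∈ I, ∀ γ : Γ, GradedRing.proj 𝒜 γ f ∈ I

/-- `C(I)`: the homogeneous ideal generated by the homogeneous components of elements of `I`. -/
def homC (I : Ideal R) : Ideal R :=
  Ideal.span {x | ∃ f ∈ I, ∃ γ : Γ, x = GradedRing.proj 𝒜 γ f}

/-- `C(J)` for a fractional ideal `J ⊆ R`, as a fractional ideal. -/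
def Cfrac (J : FractionalIdeal (nonZeroDivisors R) K) : FractionalIdeal (nonZeroDivisors R) K :=
  ↑(homC 𝒜 (idealOf K J))

/-- A fractional ideal is homogeneous if some nonzero homogeneous `s ∈ R` multiplies it into a
homogeneous integral ideal. -/
def IsHomFrac (A : FractionalIdeal (nonZeroDivisors R) K) : Prop :=
  ∃ s : R, s ≠ 0 ∧ SetLike.IsHomogeneousElem 𝒜 s ∧
    spanSingleton (nonZeroDivisors R) (algebraMap R K s) * A ≤ 1 ∧
    IsHomIdeal 𝒜 (idealOf K (spanSingleton (nonZeroDivisors R) (algebraMap R K s) * A))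

/-- A homogeneous element of the homogeneous quotient field, viewed inside `K`. -/
def IsHomElem (x : K) : Prop :=
  ∃ a b : R, SetLike.IsHomogeneousElem 𝒜 a ∧ SetLike.IsHomogeneousElem 𝒜 b ∧ b ≠ 0 ∧
    x * algebraMap R K b = algebraMap R K a

end Setup

/-- A homogeneous star operation on the graded domain `R`. -/
structure HomStarOp {Γ : Type*} [AddCommMonoid Γ] [LinearOrder Γ] [IsOrderedCancelAddMonoid Γ] [DecidableEq Γ]
    {R : Type*} [CommRing R] [IsDomain R] (𝒜 : Γ → AddSubgroup R) [GradedRing 𝒜]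
    (K : Type*) [Field K] [Algebra R K] [IsFractionRing R K] where
  toFun : FractionalIdeal (nonZeroDivisors R) K → FractionalIdeal (nonZeroDivisors R) K
  hom : ∀ A, A ≠ 0 → IsHomFrac 𝒜 K A → IsHomFrac 𝒜 K (toFun A)
  map_span : ∀ x : K, x ≠ 0 → IsHomElem 𝒜 K x →
    toFun (spanSingleton (nonZeroDivisors R) x) = spanSingleton (nonZeroDivisors R) x
  map_smul : ∀ x : K, x ≠ 0 → IsHomElem 𝒜 K x → ∀ A, A ≠ 0 → IsHomFrac 𝒜 K A →
    toFun (spanSingleton (nonZeroDivisors R) x * A) = spanSingleton (nonZeroDivisors R) x * toFun A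
  le_star : ∀ A, A ≠ 0 → IsHomFrac 𝒜 K A → A ≤ toFun A
  mono : ∀ A B, A ≠ 0 → B ≠ 0 → IsHomFrac 𝒜 K A → IsHomFrac 𝒜 K B → A ≤ B → toFun A ≤ toFun B
  idem : ∀ A, A ≠ 0 → IsHomFrac 𝒜 K A → toFun (toFun A) = toFun A

/-- A classical star operation on the domain `R`. -/
structure StarOp (R : Type*) [CommRing R] [IsDomain R]
    (K : Type*) [Field K] [Algebra R K] [IsFractionRing R K] where
  toFun : FractionalIdeal (nonZeroDivisors R) K → FractionalIdeal (nonZeroDivisors R) K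
  map_span : ∀ x : K, x ≠ 0 →
    toFun (spanSingleton (nonZeroDivisors R) x) = spanSingleton (nonZeroDivisors R) x
  map_smul : ∀ x : K, x ≠ 0 → ∀ A, A ≠ 0 →
    toFun (spanSingleton (nonZeroDivisors R) x * A) = spanSingleton (nonZeroDivisors R) x * toFun A
  le_star : ∀ A, A ≠ 0 → A ≤ toFun A
  mono : ∀ A B, A ≠ 0 → B ≠ 0 → A ≤ B → toFun A ≤ toFun B
  idem : ∀ A, A ≠ 0 → toFun (toFun A) = toFun A

section EStar

variable {Γ : Type*} [AddCommMonoid Γ] [LinearOrder Γ] [IsOrderedCancelAddMonoid Γ] [DecidableEq Γ]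
  {R : Type*} [CommRing R] [IsDomain R]
  (𝒜 : Γ → AddSubgroup R) [GradedRing 𝒜]
  (K : Type*) [Field K] [Algebra R K] [IsFractionRing R K]

/-- The submodule `⋂ { z⁻¹ (C(zA))^⋆ : 0 ≠ z ∈ (R : A) }`. -/
def eStarSub (s : HomStarOp 𝒜 K) (A : FractionalIdeal (nonZeroDivisors R) K) : Submodule R K :=
  ⨅ z ∈ {z : K | z ≠ 0 ∧ spanSingleton (nonZeroDivisors R) z * A ≤ 1},
    ↑(spanSingleton (nonZeroDivisors R) z⁻¹ *
      s.toFun (Cfrac 𝒜 K (spanSingleton (nonZeroDivisors R) z * A)))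

/-- The extension `e(⋆)` of a homogeneous star operation `⋆`,
`A^{e(⋆)} := ⋂ { z⁻¹ (C(zA))^⋆ : 0 ≠ z ∈ (R : A) }` (which is a fractional ideal whenever
`A` is a nonzero fractional ideal). -/
noncomputable def eStar (s : HomStarOp 𝒜 K) (A : FractionalIdeal (nonZeroDivisors R) K) :
    FractionalIdeal (nonZeroDivisors R) K :=
  if h : IsFractional (nonZeroDivisors R) (eStarSub 𝒜 K s A) then ⟨_, h⟩ else 0

end EStar


/-- `A^{★_f}` as a set: the union of `B^★` over finitely generated `B ⊆ A`. -/
def finTypeSet {R : Type*} [CommRing R] [IsDomain R]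
    (K : Type*) [Field K] [Algebra R K] [IsFractionRing R K]
    (t : FractionalIdeal (nonZeroDivisors R) K → FractionalIdeal (nonZeroDivisors R) K)
    (A : FractionalIdeal (nonZeroDivisors R) K) : Set K :=
  ⋃ B ∈ {B : FractionalIdeal (nonZeroDivisors R) K |
      B ≠ 0 ∧ B ≤ A ∧ (B : Submodule R K).FG}, {x : K | x ∈ t B}

/-- `A^{⋆_f}` as a set: the union of `B^⋆` over finitely generated homogeneous `B ⊆ A`. -/
def homFinTypeSet {Γ : Type*} [AddCommMonoid Γ] [LinearOrder Γ] [IsOrderedCancelAddMonoid Γ] [DecidableEq Γ]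
    {R : Type*} [CommRing R] [IsDomain R]
    (𝒜 : Γ → AddSubgroup R) [GradedRing 𝒜]
    (K : Type*) [Field K] [Algebra R K] [IsFractionRing R K]
    (t : FractionalIdeal (nonZeroDivisors R) K → FractionalIdeal (nonZeroDivisors R) K)
    (A : FractionalIdeal (nonZeroDivisors R) K) : Set K :=
  ⋃ B ∈ {B : FractionalIdeal (nonZeroDivisors R) K |
      B ≠ 0 ∧ B ≤ A ∧ IsHomFrac 𝒜 K B ∧ (B : Submodule R K).FG}, {x : K | x ∈ t B}

/-!
Let `a ∈ M` be nonzero and homogeneous, and let `N = C(M)^{⋆_f} ∩ R` be the union of the `C^⋆ ∩ R`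
over the nonzero finitely generated homogeneous ideals `C ⊆ C(M)`. Then `N` is a homogeneous
`(e(⋆))_f`-ideal containing `C(M) ⊇ M`, so once `N` is proper, maximality of `M` forces
`M = N ⊇ C(M)`.

`N` is proper: otherwise `1 ∈ C^⋆` for such a `C`, and `C ⊆ C(J)` for a finitely generated
`J ⊆ M` containing `a`. Given `z` with `zJ ⊆ R`, put `w = za ∈ R`. For the generators `f` of `J`
the graded Dedekind–Mertens lemma `c(f)^{m+1} c(w) ⊆ c(f)^m c(fw)` (`m + 1` the number of
components of `w`) gives `a⁻¹ c(w) C(J)ⁿ ⊆ C(zJ)` for large `n`, and since `1 ∈ (C(J)ⁿ)^⋆` this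
yields `z ∈ a⁻¹ c(w) ⊆ C(zJ)^⋆`. Hence `1 ∈ J^{e(⋆)} ⊆ M^{(e(⋆))_f} = M`, a contradiction.
-/

open GradedRing (proj)

section GradedSupport

variable {Γ : Type*} [AddCommMonoid Γ] [DecidableEq Γ] {R : Type*} [CommRing R]
  (𝒜 : Γ → AddSubgroup R) [GradedRing 𝒜]

noncomputable def gradedSupport (x : R) : Finset Γ := DFinsupp.support (DirectSum.decompose 𝒜 x)

/-- `c(x)`, the ideal generated by the homogeneous components of `x`. -/
def gradedContent (x : R) : Ideal R := Ideal.span (Set.range fun i => proj 𝒜 i x)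

variable {𝒜} in
lemma mem_gradedSupport {x : R} {i : Γ} : i ∈ gradedSupport 𝒜 x ↔ proj 𝒜 i x ≠ 0 := by
  simp [gradedSupport, GradedRing.proj_apply]

lemma sum_proj_gradedSupport (x : R) : ∑ i ∈ gradedSupport 𝒜 x, proj 𝒜 i x = x := by
  simpa [gradedSupport, GradedRing.proj_apply] using DirectSum.sum_support_decompose 𝒜 x

lemma proj_mem (i : Γ) (x : R) : proj 𝒜 i x ∈ 𝒜 i := by
  simp [GradedRing.proj_apply]

lemma isHomogeneousElem_proj (i : Γ) (x : R) : SetLike.IsHomogeneousElem 𝒜 (proj 𝒜 i x) :=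
  ⟨i, proj_mem 𝒜 i x⟩

variable {𝒜} in
lemma proj_of_mem {x : R} {i : Γ} (h : x ∈ 𝒜 i) : proj 𝒜 i x = x := by
  rw [GradedRing.proj_apply, DirectSum.decompose_of_mem_same 𝒜 h]

variable {𝒜} in
lemma proj_of_mem_of_ne {x : R} {i j : Γ} (h : x ∈ 𝒜 i) (hij : i ≠ j) : proj 𝒜 j x = 0 := by
  rw [GradedRing.proj_apply, DirectSum.decompose_of_mem_ne 𝒜 h hij]

variable {𝒜} in
lemma proj_add_mul_of_mem [IsLeftCancelAdd Γ] {a : R} {d : Γ} (ha : a ∈ 𝒜 d) (x : R)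
    (i : Γ) : proj 𝒜 (d + i) (a * x) = a * proj 𝒜 i x := by
  induction x using DirectSum.Decomposition.inductionOn 𝒜 with
  | zero => simp
  | @homogeneous j y =>
    rcases eq_or_ne j i with rfl | hji
    · rw [proj_of_mem (SetLike.mul_mem_graded ha y.2), proj_of_mem y.2]
    · rw [proj_of_mem_of_ne (SetLike.mul_mem_graded ha y.2) (fun h => hji (add_left_cancel h)),
        proj_of_mem_of_ne y.2 hji, mul_zero]
  | add y z hy hz => simp only [mul_add, map_add, hy, hz]

variable {𝒜} in
lemma proj_mul_of_mem_eq_zero {a : R} {d : Γ} (ha : a ∈ 𝒜 d) (x : R) {n : Γ}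
    (hn : ∀ i, d + i ≠ n) : proj 𝒜 n (a * x) = 0 := by
  induction x using DirectSum.Decomposition.inductionOn 𝒜 with
  | zero => simp
  | @homogeneous j y => exact proj_of_mem_of_ne (SetLike.mul_mem_graded ha y.2) (hn j)
  | add y z hy hz => simp only [mul_add, map_add, hy, hz, add_zero]

variable {𝒜} in
lemma exists_mem_of_card_gradedSupport_le_one {x : R} (hx : (gradedSupport 𝒜 x).card ≤ 1) :
    ∃ e, x ∈ 𝒜 e := by
  obtain ⟨e, he⟩ := Finset.card_le_one_iff_subset_singleton.mp hx
  refine ⟨e, ?_⟩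
  rw [← sum_proj_gradedSupport 𝒜 x, Finset.sum_subset he fun i _ hi => ?_,
    Finset.sum_singleton]
  · exact proj_mem 𝒜 e x
  · simpa [mem_gradedSupport] using hi

lemma gradedSupport_sub_proj (x : R) (e : Γ) :
    gradedSupport 𝒜 (x - proj 𝒜 e x) = (gradedSupport 𝒜 x).erase e := by
  ext i
  rw [Finset.mem_erase, mem_gradedSupport, mem_gradedSupport, map_sub]
  rcases eq_or_ne i e with rfl | hie
  · rw [proj_of_mem (proj_mem 𝒜 i x), sub_self]
    simp
  · rw [proj_of_mem_of_ne (proj_mem 𝒜 e x) hie.symm, sub_zero]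
    simp [hie]

lemma proj_mem_gradedContent (x : R) (i : Γ) : proj 𝒜 i x ∈ gradedContent 𝒜 x :=
  Ideal.subset_span ⟨i, rfl⟩

variable {𝒜} in
lemma gradedContent_le_iff {x : R} {T : Ideal R} :
    gradedContent 𝒜 x ≤ T ↔ ∀ i, proj 𝒜 i x ∈ T := by
  rw [gradedContent, Ideal.span_le, Set.range_subset_iff]
  rfl

lemma isHomogeneous_gradedContent (x : R) : (gradedContent 𝒜 x).IsHomogeneous 𝒜 :=
  Ideal.homogeneous_span 𝒜 _ (by rintro _ ⟨i, rfl⟩; exact isHomogeneousElem_proj 𝒜 i x)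

lemma mem_gradedContent_self (x : R) : x ∈ gradedContent 𝒜 x := by
  simpa only [sum_proj_gradedSupport] using
    Ideal.sum_mem _ fun i (_ : i ∈ gradedSupport 𝒜 x) => proj_mem_gradedContent 𝒜 x i

lemma gradedContent_eq_sum (x : R) :
    gradedContent 𝒜 x = ∑ i ∈ gradedSupport 𝒜 x, Ideal.span {proj 𝒜 i x} := by
  refine le_antisymm (gradedContent_le_iff.mpr fun i => ?_) ?_
  · by_cases hi : i ∈ gradedSupport 𝒜 x
    · exact Finset.single_le_sum (f := fun i => Ideal.span {proj 𝒜 i x})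
        (fun _ _ => bot_le) hi (Ideal.mem_span_singleton_self _)
    · rw [not_not.mp (mem_gradedSupport.not.mp hi)]
      exact zero_mem _
  · simp only [Ideal.sum_eq_sup, Finset.sup_le_iff, Ideal.span_singleton_le_iff_mem]
    exact fun i _ => proj_mem_gradedContent 𝒜 x i

variable {𝒜} in
lemma gradedContent_mul_of_mem [IsLeftCancelAdd Γ] {a : R} {d : Γ} (ha : a ∈ 𝒜 d) (x : R) :
    gradedContent 𝒜 (a * x) = Ideal.span {a} * gradedContent 𝒜 x := by
  refine le_antisymm (gradedContent_le_iff.mpr fun n => ?_) ?_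
  · by_cases hn : ∃ i, d + i = n
    · obtain ⟨i, rfl⟩ := hn
      rw [proj_add_mul_of_mem ha]
      exact Ideal.mul_mem_mul (Ideal.mem_span_singleton_self a) (proj_mem_gradedContent 𝒜 x i)
    · rw [proj_mul_of_mem_eq_zero ha x (not_exists.mp hn)]
      exact zero_mem _
  · rw [gradedContent, Ideal.span_mul_span', Set.singleton_mul, ← Set.range_comp, Ideal.span_le,
      Set.range_subset_iff]
    intro i
    simpa only [Function.comp_apply, ← proj_add_mul_of_mem ha, SetLike.mem_coe] using
      proj_mem_gradedContent 𝒜 (a * x) (d + i)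

variable {𝒜} in
lemma gradedContent_of_mem {x : R} {e : Γ} (hx : x ∈ 𝒜 e) : gradedContent 𝒜 x = Ideal.span {x} := by
  refine le_antisymm (gradedContent_le_iff.mpr fun i => ?_)
    ((Ideal.span_singleton_le_iff_mem _).mpr (mem_gradedContent_self 𝒜 x))
  rcases eq_or_ne e i with rfl | hei
  · rw [proj_of_mem hx]
    exact Ideal.mem_span_singleton_self x
  · rw [proj_of_mem_of_ne hx hei]
    exact zero_mem _

lemma gradedContent_sub_le (x y : R) :
    gradedContent 𝒜 (x - y) ≤ gradedContent 𝒜 x + gradedContent 𝒜 y :=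
  gradedContent_le_iff.mpr fun i => by
    rw [map_sub]
    exact sub_mem (Ideal.mem_sup_left (proj_mem_gradedContent 𝒜 x i))
      (Ideal.mem_sup_right (proj_mem_gradedContent 𝒜 y i))

lemma gradedContent_le_span_proj_add (w : R) (e : Γ) :
    gradedContent 𝒜 w ≤ Ideal.span {proj 𝒜 e w} + gradedContent 𝒜 (w - proj 𝒜 e w) := by
  refine gradedContent_le_iff.mpr fun ν => ?_
  rcases eq_or_ne e ν with rfl | hν
  · exact Ideal.mem_sup_left (Ideal.mem_span_singleton_self _)
  · have h : proj 𝒜 ν w = proj 𝒜 ν (w - proj 𝒜 e w) := by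
      rw [map_sub, proj_of_mem_of_ne (proj_mem 𝒜 e w) hν, sub_zero]
    rw [h]
    exact Ideal.mem_sup_right (proj_mem_gradedContent 𝒜 _ ν)

variable {𝒜} in
lemma gradedContent_le_of_mem {x : R} {I : Ideal R} (hI : I.IsHomogeneous 𝒜) (hx : x ∈ I) :
    gradedContent 𝒜 x ≤ I :=
  gradedContent_le_iff.mpr fun i => by simpa only [GradedRing.proj_apply] using hI i hx

lemma fg_gradedContent (x : R) : (gradedContent 𝒜 x).FG := by
  rw [gradedContent_eq_sum, Ideal.sum_eq_sup]
  exact Submodule.fg_finset_sup _ _ fun i _ => Submodule.fg_span_singleton _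

end GradedSupport

section IdealArithmetic

variable {R : Type*} [CommRing R]

lemma Ideal.sum_le_of_forall_le {ι : Type*} {s : Finset ι} {f : ι → Ideal R} {T : Ideal R}
    (h : ∀ i ∈ s, f i ≤ T) : ∑ i ∈ s, f i ≤ T := by
  rw [Ideal.sum_eq_sup]
  exact Finset.sup_le h

/-- The inductive step of the Dedekind–Mertens lemma as an inequality between ideals: in the
application `F = c(f) = ∑ (fᵢ)`, `P = c(fw)`, `B = (b)` for the top component `b` of `w`,
`W = c(w - b)` and `C = c(w)`. -/
lemma Ideal.dedekindMertens_step {ι : Type*} [LinearOrder ι] (S : Finset ι) (G : ι → Ideal R)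
    {F P B W C : Ideal R} (m : ℕ) (hF : F = ∑ i ∈ S, G i)
    (hW : F ^ (m + 1) * W ≤ F ^ m * P + B * F ^ (m + 1))
    (hG : ∀ i ∈ S, G i * B ≤ P + ∑ j ∈ S with i < j, G j * W) (hC : C ≤ B + W) :
    F ^ (m + 2) * C ≤ F ^ (m + 1) * P := by
  have hGF : ∀ i ∈ S, G i ≤ F := fun i hi => hF ▸ Finset.single_le_sum (fun _ _ => bot_le) hi
  have hGB : ∀ i ∈ S, G i * B * F ^ (m + 1) ≤ F ^ (m + 1) * P := by
    intro i hi
    refine (S.finite_toSet.wellFoundedOn (r := (· > ·))).induction hi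
      (P := fun i => G i * B * F ^ (m + 1) ≤ F ^ (m + 1) * P) fun i hi ih => ?_
    calc G i * B * F ^ (m + 1)
        ≤ (P + ∑ j ∈ S with i < j, G j * W) * F ^ (m + 1) := by gcongr; exact hG i hi
      _ = F ^ (m + 1) * P + ∑ j ∈ S with i < j, G j * (F ^ (m + 1) * W) := by
        rw [add_mul, Finset.sum_mul, mul_comm P]
        exact congrArg _ (Finset.sum_congr rfl fun _ _ => by ring)
      _ ≤ F ^ (m + 1) * P + ∑ j ∈ S with i < j, G j * (F ^ m * P + B * F ^ (m + 1)) := by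
        gcongr
      _ ≤ F ^ (m + 1) * P := by
        refine sup_le le_rfl (Ideal.sum_le_of_forall_le fun j hj => ?_)
        obtain ⟨hjS, hij⟩ := Finset.mem_filter.mp hj
        rw [mul_add]
        refine sup_le ?_ ?_
        · calc G j * (F ^ m * P) ≤ F * (F ^ m * P) := by gcongr; exact hGF j hjS
            _ = F ^ (m + 1) * P := by ring
        · simpa only [mul_assoc] using ih j hjS hij
  have hBF : B * F ^ (m + 2) ≤ F ^ (m + 1) * P := by
    calc B * F ^ (m + 2) = ∑ i ∈ S, G i * B * F ^ (m + 1) := by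
          rw [← Finset.sum_mul, ← Finset.sum_mul, ← hF]; ring
      _ ≤ F ^ (m + 1) * P := Ideal.sum_le_of_forall_le hGB
  calc F ^ (m + 2) * C ≤ F ^ (m + 2) * (B + W) := by gcongr
    _ = B * F ^ (m + 2) + F * (F ^ (m + 1) * W) := by ring
    _ ≤ F ^ (m + 1) * P + F * (F ^ m * P + B * F ^ (m + 1)) := by gcongr
    _ = F ^ (m + 1) * P + (F ^ (m + 1) * P + B * F ^ (m + 2)) := by ring
    _ ≤ F ^ (m + 1) * P := sup_le le_rfl (sup_le le_rfl hBF)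

lemma Ideal.sum_pow_le_sum_pow {ι : Type*} (s : Finset ι) (C : ι → Ideal R)
    (k : ℕ) : (∑ i ∈ s, C i) ^ (s.card * k + 1) ≤ ∑ i ∈ s, C i ^ k := by
  classical
  induction s using Finset.induction_on with
  | empty => simp
  | insert a s ha ih =>
    rw [Finset.sum_insert ha, Finset.sum_insert ha, Finset.card_insert_of_notMem ha,
      show (s.card + 1) * k + 1 = k + (s.card * k + 1) by ring]
    exact Ideal.sup_pow_add_le_pow_sup_pow.trans (sup_le_sup_left ih _)

end IdealArithmetic

section DedekindMertens

variable {Γ : Type*} [AddCommMonoid Γ] [LinearOrder Γ] [IsOrderedCancelAddMonoid Γ]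
  [DecidableEq Γ] {R : Type*} [CommRing R] (𝒜 : Γ → AddSubgroup R) [GradedRing 𝒜]

lemma span_proj_mul_span_proj_max_le (f w : R) {e : Γ}
    (he : ∀ ν ∈ gradedSupport 𝒜 w, ν ≤ e) {i : Γ} (hi : i ∈ gradedSupport 𝒜 f) :
    Ideal.span {proj 𝒜 i f} * Ideal.span {proj 𝒜 e w} ≤
      gradedContent 𝒜 (f * w) + ∑ j ∈ gradedSupport 𝒜 f with i < j,
        Ideal.span {proj 𝒜 j f} * gradedContent 𝒜 (w - proj 𝒜 e w) := by
  -- The component of `f * w` in degree `i + e` is `f_i b` plus products `f_i' w_ν` with `i < i'`,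
  -- where `ν < e`, so that `w_ν` is a component of `w - b`.
  set b := proj 𝒜 e w
  set T := ∑ j ∈ gradedSupport 𝒜 f with i < j,
    Ideal.span {proj 𝒜 j f} * gradedContent 𝒜 (w - b)
  have hother : ∀ i' ∈ gradedSupport 𝒜 f, i' ≠ i → proj 𝒜 (i + e) (proj 𝒜 i' f * w) ∈ T := by
    intro i' hi' hne
    by_cases hex : ∃ ν, i' + ν = i + e
    swap
    · rw [proj_mul_of_mem_eq_zero (proj_mem 𝒜 i' f) w (not_exists.mp hex)]
      exact zero_mem _
    obtain ⟨ν, hν⟩ := hex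
    rw [← hν, proj_add_mul_of_mem (proj_mem 𝒜 i' f)]
    rcases hne.lt_or_gt with hlt | hgt
    · have heν : e < ν := lt_of_add_lt_add_left <|
        calc i' + e < i + e := add_lt_add_left hlt e
          _ = i' + ν := hν.symm
      have hν : proj 𝒜 ν w = 0 := by
        by_contra h
        exact (he ν (mem_gradedSupport.mpr h)).not_gt heν
      rw [hν, mul_zero]
      exact zero_mem _
    · have hνe : e ≠ ν := by
        rintro rfl
        exact hgt.ne' (add_right_cancel hν)
      have hν : proj 𝒜 ν w = proj 𝒜 ν (w - b) := by
        rw [map_sub, proj_of_mem_of_ne (proj_mem 𝒜 e w) hνe, sub_zero]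
      rw [hν]
      exact Finset.single_le_sum (f := fun j => Ideal.span {proj 𝒜 j f} *
          gradedContent 𝒜 (w - b)) (fun _ _ => bot_le) (Finset.mem_filter.mpr ⟨hi', hgt⟩)
        (Ideal.mul_mem_mul (Ideal.mem_span_singleton_self _) (proj_mem_gradedContent 𝒜 _ ν))
  have hsplit : proj 𝒜 i f * b = proj 𝒜 (i + e) (f * w) -
      ∑ i' ∈ (gradedSupport 𝒜 f).erase i, proj 𝒜 (i + e) (proj 𝒜 i' f * w) := by
    have hf : f * w = ∑ i' ∈ gradedSupport 𝒜 f, proj 𝒜 i' f * w := by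
      rw [← Finset.sum_mul, sum_proj_gradedSupport]
    rw [hf, map_sum, ← Finset.add_sum_erase _ _ hi, proj_add_mul_of_mem (proj_mem 𝒜 i f)]
    ring
  rw [Ideal.span_singleton_mul_span_singleton, Ideal.span_singleton_le_iff_mem, hsplit]
  refine sub_mem (Ideal.mem_sup_left (proj_mem_gradedContent 𝒜 _ _)) (Ideal.sum_mem _ ?_)
  intro i' hi'
  rw [Finset.mem_erase] at hi'
  exact Ideal.mem_sup_right (hother i' hi'.2 hi'.1)

/-- The graded Dedekind–Mertens lemma. -/
theorem gradedContent_pow_succ_mul_le (f : R) {m : ℕ} {w : R}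
    (hw : (gradedSupport 𝒜 w).card ≤ m + 1) :
    gradedContent 𝒜 f ^ (m + 1) * gradedContent 𝒜 w ≤
      gradedContent 𝒜 f ^ m * gradedContent 𝒜 (f * w) := by
  induction m generalizing w with
  | zero =>
    obtain ⟨e, he⟩ := exists_mem_of_card_gradedSupport_le_one hw
    rw [pow_one, pow_zero, one_mul, mul_comm f, gradedContent_mul_of_mem he,
      gradedContent_of_mem he, mul_comm]
  | succ m ih =>
    set F := gradedContent 𝒜 f
    by_cases hle : (gradedSupport 𝒜 w).card ≤ m + 1
    · calc F ^ (m + 2) * gradedContent 𝒜 w = F * (F ^ (m + 1) * gradedContent 𝒜 w) := by ring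
        _ ≤ F * (F ^ m * gradedContent 𝒜 (f * w)) := Ideal.mul_mono_right (ih hle)
        _ = F ^ (m + 1) * gradedContent 𝒜 (f * w) := by ring
    have hne : (gradedSupport 𝒜 w).Nonempty := Finset.card_pos.mp (by omega)
    set e := (gradedSupport 𝒜 w).max' hne
    set b := proj 𝒜 e w
    have hb : b ∈ 𝒜 e := proj_mem 𝒜 e w
    have hcard : (gradedSupport 𝒜 (w - b)).card ≤ m + 1 := by
      rw [gradedSupport_sub_proj, Finset.card_erase_of_mem (Finset.max'_mem _ hne)]
      omega
    have hfw : gradedContent 𝒜 (f * (w - b)) ≤ gradedContent 𝒜 (f * w) + Ideal.span {b} * F := by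
      rw [← gradedContent_mul_of_mem hb, mul_sub, mul_comm b]
      exact gradedContent_sub_le 𝒜 _ _
    refine Ideal.dedekindMertens_step (gradedSupport 𝒜 f) (fun i => Ideal.span {proj 𝒜 i f}) m
      (gradedContent_eq_sum 𝒜 f) ?_
      (fun i => span_proj_mul_span_proj_max_le 𝒜 f w fun ν => (gradedSupport 𝒜 w).le_max' ν)
      (gradedContent_le_span_proj_add 𝒜 w e)
    calc F ^ (m + 1) * gradedContent 𝒜 (w - b)
        ≤ F ^ m * gradedContent 𝒜 (f * (w - b)) := ih hcard
      _ ≤ F ^ m * (gradedContent 𝒜 (f * w) + Ideal.span {b} * F) := by gcongr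
      _ = F ^ m * gradedContent 𝒜 (f * w) + Ideal.span {b} * F ^ (m + 1) := by ring

end DedekindMertens

section HomC

variable {Γ : Type*} [AddCommMonoid Γ] [DecidableEq Γ] {R : Type*} [CommRing R]
  (𝒜 : Γ → AddSubgroup R) [GradedRing 𝒜]

lemma homC_eq_toIdeal_homogeneousHull (I : Ideal R) :
    homC 𝒜 I = (I.homogeneousHull 𝒜).toIdeal := by
  refine congrArg Ideal.span (Set.ext fun x => ?_)
  simp only [Set.mem_ofPred_eq, GradedRing.proj_apply]
  exact ⟨fun ⟨f, hf, i, h⟩ => ⟨i, ⟨f, hf⟩, h.symm⟩,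
    fun ⟨i, ⟨f, hf⟩, h⟩ => ⟨f, hf, i, h.symm⟩⟩

lemma le_homC (I : Ideal R) : I ≤ homC 𝒜 I := by
  rw [homC_eq_toIdeal_homogeneousHull]
  exact Ideal.le_toIdeal_homogeneousHull 𝒜 I

lemma isHomogeneous_homC (I : Ideal R) : (homC 𝒜 I).IsHomogeneous 𝒜 := by
  rw [homC_eq_toIdeal_homogeneousHull]
  exact (I.homogeneousHull 𝒜).isHomogeneous

def fgHomBelow (I : Ideal R) : Set (Ideal R) :=
  {C | C ≠ ⊥ ∧ C.FG ∧ C.IsHomogeneous 𝒜 ∧ C ≤ I}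

variable {𝒜}

lemma homC_mono {I J : Ideal R} (h : I ≤ J) : homC 𝒜 I ≤ homC 𝒜 J := by
  simp only [homC_eq_toIdeal_homogeneousHull]
  exact Ideal.homogeneousHull_mono 𝒜 h

lemma homC_le_of_le {I J : Ideal R} (hIJ : I ≤ J) (hJ : J.IsHomogeneous 𝒜) :
    homC 𝒜 I ≤ J := by
  rw [homC_eq_toIdeal_homogeneousHull]
  exact (Ideal.homogeneousHull.gc 𝒜 I ⟨J, hJ⟩).mpr hIJ

lemma homC_ne_bot {I : Ideal R} (hI : I ≠ ⊥) : homC 𝒜 I ≠ ⊥ :=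
  fun h => hI (eq_bot_iff.mpr (h ▸ le_homC 𝒜 I))

lemma gradedContent_le_homC {I : Ideal R} {f : R} (hf : f ∈ I) :
    gradedContent 𝒜 f ≤ homC 𝒜 I :=
  gradedContent_le_iff.mpr fun i => Ideal.subset_span ⟨f, hf, i, rfl⟩

lemma homC_eq_iSup_gradedContent (I : Ideal R) : homC 𝒜 I = ⨆ f : I, gradedContent 𝒜 f := by
  refine le_antisymm (Ideal.span_le.mpr ?_) (iSup_le fun f => gradedContent_le_homC f.2)
  rintro _ ⟨f, hf, i, rfl⟩
  exact le_iSup (fun f : I => gradedContent 𝒜 (f : R)) ⟨f, hf⟩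
    (proj_mem_gradedContent 𝒜 f i)

lemma homC_span_eq_sum (s : Finset R) :
    homC 𝒜 (Ideal.span s) = ∑ f ∈ s, gradedContent 𝒜 f := by
  refine le_antisymm (homC_le_of_le ?_ ?_)
    (Ideal.sum_le_of_forall_le fun f hf => gradedContent_le_homC (Ideal.subset_span hf))
  · exact Ideal.span_le.mpr fun f hf => Finset.single_le_sum (f := gradedContent 𝒜)
      (fun _ _ => bot_le) hf (mem_gradedContent_self 𝒜 f)
  · rw [Ideal.sum_eq_sup, Finset.sup_eq_iSup]
    exact Ideal.IsHomogeneous.iSup₂ fun f _ => isHomogeneous_gradedContent 𝒜 f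

lemma fg_homC {I : Ideal R} (hI : I.FG) : (homC 𝒜 I).FG := by
  obtain ⟨s, rfl⟩ := hI
  rw [homC_span_eq_sum, Ideal.sum_eq_sup]
  exact Submodule.fg_finset_sup _ _ fun f _ => fg_gradedContent 𝒜 f

lemma exists_fg_le_homC {I C : Ideal R} (hC : C.FG) (hCI : C ≤ homC 𝒜 I) :
    ∃ J ≤ I, J.FG ∧ C ≤ homC 𝒜 J := by
  classical
  rw [homC_eq_iSup_gradedContent] at hCI
  obtain ⟨t, ht⟩ := (CompleteLattice.isCompactElement_iff_exists_le_iSup_of_le_iSup C).mp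
    ((Submodule.fg_iff_compact C).mp hC) _ _ hCI
  refine ⟨Ideal.span (t.image Subtype.val), ?_, ⟨_, rfl⟩,
    ht.trans (Finset.sup_le fun f hf => ?_)⟩
  · simp only [Finset.coe_image, Ideal.span_le, Set.image_subset_iff]
    exact fun f _ => f.2
  · exact gradedContent_le_homC (Ideal.subset_span (Finset.mem_image_of_mem _ hf))

lemma sup_mem_fgHomBelow {I C D : Ideal R} (hC : C ∈ fgHomBelow 𝒜 I) (hD : D ∈ fgHomBelow 𝒜 I) :
    C ⊔ D ∈ fgHomBelow 𝒜 I :=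
  ⟨ne_bot_of_le_ne_bot hC.1 le_sup_left, Submodule.FG.sup hC.2.1 hD.2.1, hC.2.2.1.sup hD.2.2.1,
    sup_le hC.2.2.2 hD.2.2.2⟩

lemma isHomIdeal_iff {I : Ideal R} : IsHomIdeal 𝒜 I ↔ I.IsHomogeneous 𝒜 := by
  simp only [IsHomIdeal, GradedRing.proj_apply]
  exact ⟨fun h i r hr => h r hr i, fun h r hr i => h i hr⟩

lemma gradedContent_mem_fgHomBelow {M : Ideal R} {f : R} (hf : f ∈ M) (hf0 : f ≠ 0) :
    gradedContent 𝒜 f ∈ fgHomBelow 𝒜 (homC 𝒜 M) :=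
  ⟨fun h => hf0 (by simpa [h] using mem_gradedContent_self 𝒜 f), fg_gradedContent 𝒜 f,
    isHomogeneous_gradedContent 𝒜 f, gradedContent_le_homC hf⟩

lemma Ideal.IsHomogeneous.pow {I : Ideal R} (hI : I.IsHomogeneous 𝒜) (n : ℕ) :
    (I ^ n).IsHomogeneous 𝒜 := by
  induction n with
  | zero => simpa using Ideal.IsHomogeneous.top 𝒜
  | succ n ih => rw [pow_succ]; exact ih.mul hI

end HomC

section ContentBound

variable {Γ : Type*} [AddCommMonoid Γ] [LinearOrder Γ] [IsOrderedCancelAddMonoid Γ]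
  [DecidableEq Γ] {R : Type*} [CommRing R] {𝒜 : Γ → AddSubgroup R} [GradedRing 𝒜]

lemma gradedContent_mul_homC_span_pow_le {a : R} {δ : Γ} (ha : a ∈ 𝒜 δ) {w : R}
    {s : Finset R} {X : Ideal R} (hX : X.IsHomogeneous 𝒜)
    (hsX : ∀ f ∈ s, ∃ v ∈ X, f * w = a * v) :
    gradedContent 𝒜 w * homC 𝒜 (Ideal.span s) ^ (s.card * ((gradedSupport 𝒜 w).card + 1) + 1)
      ≤ Ideal.span {a} * X := by
  set n := (gradedSupport 𝒜 w).card
  calc gradedContent 𝒜 w * homC 𝒜 (Ideal.span s) ^ (s.card * (n + 1) + 1)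
      ≤ gradedContent 𝒜 w * ∑ f ∈ s, gradedContent 𝒜 f ^ (n + 1) := by
        rw [homC_span_eq_sum]
        gcongr
        exact Ideal.sum_pow_le_sum_pow _ _ _
    _ = ∑ f ∈ s, gradedContent 𝒜 f ^ (n + 1) * gradedContent 𝒜 w := by
        rw [Finset.mul_sum]
        exact Finset.sum_congr rfl fun _ _ => mul_comm _ _
    _ ≤ Ideal.span {a} * X := Ideal.sum_le_of_forall_le fun f hf => by
        obtain ⟨v, hv, hfv⟩ := hsX f hf
        calc gradedContent 𝒜 f ^ (n + 1) * gradedContent 𝒜 w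
            ≤ gradedContent 𝒜 f ^ n * gradedContent 𝒜 (f * w) :=
              gradedContent_pow_succ_mul_le 𝒜 f n.le_succ
          _ ≤ gradedContent 𝒜 (f * w) := Ideal.mul_le_right
          _ = Ideal.span {a} * gradedContent 𝒜 v := by rw [hfv, gradedContent_mul_of_mem ha]
          _ ≤ Ideal.span {a} * X := by gcongr; exact gradedContent_le_of_mem hX hv

end ContentBound

open scoped nonZeroDivisors

section FractionalIdeal

variable {R : Type*} [CommRing R] {K : Type*} [Field K] [Algebra R K]

lemma mem_idealOf {A : FractionalIdeal R⁰ K} {r : R} : r ∈ idealOf K A ↔ algebraMap R K r ∈ A :=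
  Iff.rfl

lemma coeIdeal_le_iff_le_idealOf {I : Ideal R} {A : FractionalIdeal R⁰ K} :
    (I : FractionalIdeal R⁰ K) ≤ A ↔ I ≤ idealOf K A := by
  refine ⟨fun h r hr => h (mem_coeIdeal_of_mem _ hr), fun h x hx => ?_⟩
  obtain ⟨r, hr, rfl⟩ := (mem_coeIdeal _).mp hx
  exact h hr

lemma FractionalIdeal.ne_zero_of_mem {A : FractionalIdeal R⁰ K} {x : K} (hx : x ∈ A)
    (hx0 : x ≠ 0) : A ≠ 0 := by
  rintro rfl
  exact hx0 ((mem_zero_iff _).mp hx)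

lemma FractionalIdeal.exists_mem_ne_zero {A : FractionalIdeal R⁰ K} (hA : A ≠ 0) :
    ∃ x ∈ A, x ≠ 0 :=
  Submodule.exists_mem_ne_zero_of_ne_bot (mt coeToSubmodule_eq_bot.mp hA)

lemma FractionalIdeal.mul_ne_zero_of_ne_zero {A B : FractionalIdeal R⁰ K} (hA : A ≠ 0)
    (hB : B ≠ 0) : A * B ≠ 0 := by
  obtain ⟨x, hx, hx0⟩ := exists_mem_ne_zero hA
  obtain ⟨y, hy, hy0⟩ := exists_mem_ne_zero hB
  exact ne_zero_of_mem (mul_mem_mul hx hy) (mul_ne_zero hx0 hy0)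

lemma idealOf_mono {A B : FractionalIdeal R⁰ K} (h : A ≤ B) : idealOf K A ≤ idealOf K B :=
  fun _ hr => h hr

lemma exists_mem_idealOf_of_mem {A : FractionalIdeal R⁰ K} (hA : A ≤ 1) {x : K} (hx : x ∈ A) :
    ∃ r ∈ idealOf K A, algebraMap R K r = x := by
  obtain ⟨r, rfl⟩ := (mem_one_iff _).mp (hA hx)
  exact ⟨r, hx, rfl⟩

lemma coeIdeal_idealOf {A : FractionalIdeal R⁰ K} (hA : A ≤ 1) :
    (idealOf K A : FractionalIdeal R⁰ K) = A := by
  refine le_antisymm (coeIdeal_le_iff_le_idealOf.mpr le_rfl) fun x hx => ?_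
  obtain ⟨r, hr, rfl⟩ := exists_mem_idealOf_of_mem hA hx
  exact mem_coeIdeal_of_mem _ hr

variable [IsFractionRing R K]

lemma idealOf_coeIdeal (I : Ideal R) : idealOf K (I : FractionalIdeal R⁰ K) = I := by
  refine le_antisymm (fun r hr => ?_) (coeIdeal_le_iff_le_idealOf.mp le_rfl)
  obtain ⟨r', hr', h⟩ := (mem_coeIdeal _).mp (mem_idealOf.mp hr)
  rwa [← IsFractionRing.injective R K h]

lemma algebraMap_mem_coeIdeal {I : Ideal R} {r : R} :
    algebraMap R K r ∈ (I : FractionalIdeal R⁰ K) ↔ r ∈ I := by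
  rw [← mem_idealOf, idealOf_coeIdeal]

lemma FractionalIdeal.mul_mem_spanSingleton_mul_iff {A : FractionalIdeal R⁰ K} {x y : K}
    (hx : x ≠ 0) : x * y ∈ spanSingleton R⁰ x * A ↔ y ∈ A := by
  rw [mem_singleton_mul]
  exact ⟨fun ⟨y', hy', h⟩ => mul_left_cancel₀ hx h ▸ hy', fun hy => ⟨y, hy, rfl⟩⟩

lemma spanSingleton_inv_mul_coeIdeal_le [IsDomain R] {a : R} (ha : a ≠ 0) {I X : Ideal R}
    (h : I ≤ Ideal.span {a} * X) : spanSingleton R⁰ (algebraMap R K a)⁻¹ * I ≤ X := by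
  have ha' : algebraMap R K a ≠ 0 := by simpa using ha
  calc spanSingleton R⁰ (algebraMap R K a)⁻¹ * I
      ≤ spanSingleton R⁰ (algebraMap R K a)⁻¹ * ↑(Ideal.span {a} * X) := by
        gcongr spanSingleton R⁰ _ * ?_
        exact (coeIdeal_le_coeIdeal K).mpr h
    _ = X := by
        rw [coeIdeal_mul, coeIdeal_span_singleton, ← mul_assoc, spanSingleton_mul_spanSingleton,
          inv_mul_cancel₀ ha', spanSingleton_one, one_mul]

end FractionalIdeal

lemma isHomElem_div {Γ R K : Type*} [CommRing R] [IsDomain R] [Field K] [Algebra R K]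
    [IsFractionRing R K] {𝒜 : Γ → AddSubgroup R} {p q : R} (hp : SetLike.IsHomogeneousElem 𝒜 p)
    (hq : SetLike.IsHomogeneousElem 𝒜 q) (hq0 : q ≠ 0) :
    IsHomElem 𝒜 K (algebraMap R K p / algebraMap R K q) :=
  ⟨p, q, hp, hq, hq0, div_mul_cancel₀ _ (by simpa using hq0)⟩

section IsHomFrac

variable {Γ : Type*} [AddCommMonoid Γ] [DecidableEq Γ] {R : Type*} [CommRing R]
  {𝒜 : Γ → AddSubgroup R} [GradedRing 𝒜] {K : Type*} [Field K] [Algebra R K]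
  [IsFractionRing R K]

lemma isHomFrac_iff {A : FractionalIdeal R⁰ K} :
    IsHomFrac 𝒜 K A ↔ ∃ s : R, s ≠ 0 ∧ SetLike.IsHomogeneousElem 𝒜 s ∧
      ∃ I : Ideal R, I.IsHomogeneous 𝒜 ∧ spanSingleton R⁰ (algebraMap R K s) * A = I := by
  constructor
  · rintro ⟨s, hs0, hs, h1, hI⟩
    exact ⟨s, hs0, hs, _, isHomIdeal_iff.mp hI, (coeIdeal_idealOf h1).symm⟩
  · rintro ⟨s, hs0, hs, I, hI, h⟩
    refine ⟨s, hs0, hs, h ▸ coeIdeal_le_one, ?_⟩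
    rw [h, idealOf_coeIdeal]
    exact isHomIdeal_iff.mpr hI

lemma isHomogeneous_idealOf [IsLeftCancelAdd Γ] {A : FractionalIdeal R⁰ K} (hA : IsHomFrac 𝒜 K A) :
    (idealOf K A).IsHomogeneous 𝒜 := by
  obtain ⟨t, ht0, ⟨ε, htε⟩, I, hI, hAI⟩ := isHomFrac_iff.mp hA
  have ht0' : algebraMap R K t ≠ 0 := by simpa using ht0
  have hmem : ∀ r : R, algebraMap R K r ∈ A ↔ t * r ∈ I := fun r => by
    rw [← mul_mem_spanSingleton_mul_iff ht0', hAI, ← map_mul,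
      algebraMap_mem_coeIdeal]
  refine isHomIdeal_iff.mp fun r hr i => mem_idealOf.mpr ((hmem _).mpr ?_)
  rw [← proj_add_mul_of_mem htε]
  exact isHomIdeal_iff.mpr hI _ ((hmem r).mp hr) _

variable [IsDomain R]

lemma isHomFrac_coeIdeal {I : Ideal R} (hI : I.IsHomogeneous 𝒜) :
    IsHomFrac 𝒜 K (I : FractionalIdeal R⁰ K) :=
  isHomFrac_iff.mpr ⟨1, one_ne_zero, SetLike.isHomogeneousElem_one 𝒜, I, hI, by simp⟩

lemma isHomFrac_one : IsHomFrac 𝒜 K (1 : FractionalIdeal R⁰ K) := by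
  simpa using isHomFrac_coeIdeal (K := K) (Ideal.IsHomogeneous.top 𝒜)

lemma isHomFrac_spanSingleton_mul {x : K} (hx : IsHomElem 𝒜 K x) {B : FractionalIdeal R⁰ K}
    (hB : IsHomFrac 𝒜 K B) : IsHomFrac 𝒜 K (spanSingleton R⁰ x * B) := by
  obtain ⟨a, b, ha, hb, hb0, hxab⟩ := hx
  obtain ⟨t, ht0, ht, I, hI, hBI⟩ := isHomFrac_iff.mp hB
  refine isHomFrac_iff.mpr ⟨b * t, mul_ne_zero hb0 ht0, hb.mul ht, Ideal.span {a} * I,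
    (Ideal.homogeneous_span 𝒜 _ (by simpa using ha)).mul hI, ?_⟩
  calc spanSingleton R⁰ (algebraMap R K (b * t)) * (spanSingleton R⁰ x * B)
      = spanSingleton R⁰ (x * algebraMap R K b) * (spanSingleton R⁰ (algebraMap R K t) * B) := by
        simp only [map_mul, ← spanSingleton_mul_spanSingleton]
        ring
    _ = ↑(Ideal.span {a} * I) := by
        rw [hxab, hBI, coeIdeal_mul, coeIdeal_span_singleton]

lemma isHomFrac_mul {A B : FractionalIdeal R⁰ K} (hA : IsHomFrac 𝒜 K A) (hB : IsHomFrac 𝒜 K B) :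
    IsHomFrac 𝒜 K (A * B) := by
  obtain ⟨s, hs0, hs, I, hI, hAI⟩ := isHomFrac_iff.mp hA
  obtain ⟨t, ht0, ht, J, hJ, hBJ⟩ := isHomFrac_iff.mp hB
  refine isHomFrac_iff.mpr ⟨s * t, mul_ne_zero hs0 ht0, hs.mul ht, I * J, hI.mul hJ, ?_⟩
  rw [coeIdeal_mul, ← hAI, ← hBJ, map_mul, ← spanSingleton_mul_spanSingleton]
  ring

lemma IsHomFrac.exists_sum {A : FractionalIdeal R⁰ K} (hA : IsHomFrac 𝒜 K A) {p : K}
    (hp : p ∈ A) : ∃ (σ : Finset Γ) (g : Γ → K), p = ∑ γ ∈ σ, g γ ∧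
      ∀ γ ∈ σ, g γ ∈ A ∧ IsHomElem 𝒜 K (g γ) ∧ g γ ≠ 0 := by
  obtain ⟨t, ht0, ht, I, hI, hAI⟩ := isHomFrac_iff.mp hA
  have ht0' : algebraMap R K t ≠ 0 := by simpa using ht0
  obtain ⟨y, hy, hyp⟩ :=
    (mem_coeIdeal _).mp (hAI ▸ mul_mem_mul (mem_spanSingleton_self _ _) hp)
  refine ⟨gradedSupport 𝒜 y, fun γ => algebraMap R K (proj 𝒜 γ y) / algebraMap R K t,
    ?_, fun γ hγ => ⟨?_, isHomElem_div (isHomogeneousElem_proj 𝒜 γ y) ht ht0, ?_⟩⟩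
  · rw [← Finset.sum_div, ← map_sum, sum_proj_gradedSupport, hyp, mul_div_cancel_left₀ _ ht0']
  · rw [← mul_mem_spanSingleton_mul_iff ht0', hAI, mul_div_cancel₀ _ ht0']
    exact mem_coeIdeal_of_mem _ ((isHomIdeal_iff.mpr hI) _ hy γ)
  · exact div_ne_zero (by simpa using mem_gradedSupport.mp hγ) ht0'

end IsHomFrac

namespace HomStarOp

variable {Γ : Type*} [AddCommMonoid Γ] [LinearOrder Γ] [IsOrderedCancelAddMonoid Γ]
  [DecidableEq Γ] {R : Type*} [CommRing R] [IsDomain R] {𝒜 : Γ → AddSubgroup R} [GradedRing 𝒜]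
  {K : Type*} [Field K] [Algebra R K] [IsFractionRing R K] (sf : HomStarOp 𝒜 K)

lemma map_one : sf.toFun 1 = 1 := by
  have h := sf.map_span 1 one_ne_zero ⟨1, 1, SetLike.isHomogeneousElem_one 𝒜,
    SetLike.isHomogeneousElem_one 𝒜, one_ne_zero, by simp⟩
  rwa [spanSingleton_one] at h

lemma map_ne_zero {A : FractionalIdeal R⁰ K} (hA0 : A ≠ 0) (hA : IsHomFrac 𝒜 K A) :
    sf.toFun A ≠ 0 :=
  fun h => hA0 (le_antisymm (h ▸ sf.le_star A hA0 hA) (zero_le _))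

lemma map_le_one {A : FractionalIdeal R⁰ K} (hA0 : A ≠ 0) (hA : IsHomFrac 𝒜 K A) (hA1 : A ≤ 1) :
    sf.toFun A ≤ 1 :=
  sf.map_one ▸ sf.mono A 1 hA0 one_ne_zero hA isHomFrac_one hA1

lemma map_le_map_of_le {A B : FractionalIdeal R⁰ K} (hA0 : A ≠ 0) (hA : IsHomFrac 𝒜 K A)
    (hB0 : B ≠ 0) (hB : IsHomFrac 𝒜 K B) (hAB : A ≤ sf.toFun B) : sf.toFun A ≤ sf.toFun B :=
  sf.idem B hB0 hB ▸ sf.mono A _ hA0 (sf.map_ne_zero hB0 hB) hA (sf.hom B hB0 hB) hAB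

lemma mul_map_le {A B : FractionalIdeal R⁰ K} (hA0 : A ≠ 0) (hA : IsHomFrac 𝒜 K A)
    (hB0 : B ≠ 0) (hB : IsHomFrac 𝒜 K B) : A * sf.toFun B ≤ sf.toFun (A * B) := by
  refine FractionalIdeal.mul_le.mpr fun p hp q hq => ?_
  obtain ⟨σ, g, rfl, hg⟩ := hA.exists_sum hp
  rw [Finset.sum_mul]
  refine (sf.toFun (A * B) : Submodule R K).sum_mem fun γ hγ => ?_
  obtain ⟨hgA, hg, hg0⟩ := hg γ hγ
  have hgq : g γ * q ∈ sf.toFun (spanSingleton R⁰ (g γ) * B) :=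
    sf.map_smul _ hg0 hg B hB0 hB ▸ mul_mem_mul (mem_spanSingleton_self _ _) hq
  exact sf.mono _ _ (mul_ne_zero_of_ne_zero (spanSingleton_eq_zero_iff.not.mpr hg0) hB0)
    (mul_ne_zero_of_ne_zero hA0 hB0) (isHomFrac_spanSingleton_mul hg hB) (isHomFrac_mul hA hB)
    (by gcongr; exact spanSingleton_le_iff_mem.mpr hgA) hgq

lemma le_map_of_mul_le {A B C : FractionalIdeal R⁰ K} (hA0 : A ≠ 0) (hA : IsHomFrac 𝒜 K A)
    (hB0 : B ≠ 0) (hB : IsHomFrac 𝒜 K B) (hB1 : (1 : K) ∈ sf.toFun B) (hC0 : C ≠ 0)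
    (hC : IsHomFrac 𝒜 K C) (hABC : A * B ≤ C) : A ≤ sf.toFun C :=
  calc A = A * 1 := (mul_one A).symm
    _ ≤ A * sf.toFun B := by gcongr; exact FractionalIdeal.one_le.mpr hB1
    _ ≤ sf.toFun (A * B) := sf.mul_map_le hA0 hA hB0 hB
    _ ≤ sf.toFun C := sf.mono _ _ (mul_ne_zero_of_ne_zero hA0 hB0) hC0 (isHomFrac_mul hA hB) hC hABC

lemma one_mem_map_coeIdeal_pow {Q : Ideal R} (hQ0 : Q ≠ ⊥) (hQ : Q.IsHomogeneous 𝒜)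
    (h1 : (1 : K) ∈ sf.toFun Q) (n : ℕ) : (1 : K) ∈ sf.toFun ↑(Q ^ n) := by
  induction n with
  | zero => simp [sf.map_one]
  | succ n ih =>
    have hQn0 : (↑(Q ^ n) : FractionalIdeal R⁰ K) ≠ 0 := coeIdeal_ne_zero.mpr (pow_ne_zero n hQ0)
    have hQn1 : (↑(Q ^ (n + 1)) : FractionalIdeal R⁰ K) ≠ 0 :=
      coeIdeal_ne_zero.mpr (pow_ne_zero _ hQ0)
    refine sf.map_le_map_of_le hQn0 (isHomFrac_coeIdeal (hQ.pow n)) hQn1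
      (isHomFrac_coeIdeal (hQ.pow _)) ?_ ih
    exact sf.le_map_of_mul_le hQn0 (isHomFrac_coeIdeal (hQ.pow n)) (coeIdeal_ne_zero.mpr hQ0)
      (isHomFrac_coeIdeal hQ) h1 hQn1 (isHomFrac_coeIdeal (hQ.pow _))
      (by rw [pow_succ, coeIdeal_mul])

lemma map_coeIdeal_mono {C D : Ideal R} (hC0 : C ≠ ⊥) (hC : C.IsHomogeneous 𝒜)
    (hD : D.IsHomogeneous 𝒜) (hCD : C ≤ D) : sf.toFun C ≤ sf.toFun D :=
  sf.mono _ _ (coeIdeal_ne_zero.mpr hC0) (coeIdeal_ne_zero.mpr (ne_bot_of_le_ne_bot hC0 hCD))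
    (isHomFrac_coeIdeal hC) (isHomFrac_coeIdeal hD) ((coeIdeal_le_coeIdeal K).mpr hCD)

lemma le_idealOf_map {C : Ideal R} (hC0 : C ≠ ⊥) (hC : C.IsHomogeneous 𝒜) :
    C ≤ idealOf K (sf.toFun C) :=
  coeIdeal_le_iff_le_idealOf.mp (sf.le_star _ (coeIdeal_ne_zero.mpr hC0) (isHomFrac_coeIdeal hC))

end HomStarOp

section EStar

variable {Γ : Type*} [AddCommMonoid Γ] [LinearOrder Γ] [IsOrderedCancelAddMonoid Γ]
  [DecidableEq Γ] {R : Type*} [CommRing R] [IsDomain R] {𝒜 : Γ → AddSubgroup R} [GradedRing 𝒜]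
  {K : Type*} [Field K] [Algebra R K] [IsFractionRing R K] (sf : HomStarOp 𝒜 K)

lemma mem_eStar_iff {A : FractionalIdeal R⁰ K} (hA : A ≤ 1) {x : K} :
    x ∈ eStar 𝒜 K sf A ↔ ∀ z : K, z ≠ 0 → spanSingleton R⁰ z * A ≤ 1 →
      x ∈ spanSingleton R⁰ z⁻¹ * sf.toFun (Cfrac 𝒜 K (spanSingleton R⁰ z * A)) := by
  have hfrac : IsFractional R⁰ (eStarSub 𝒜 K sf A) :=
    isFractional_of_le (J := spanSingleton R⁰ 1⁻¹ * sf.toFun (Cfrac 𝒜 K (spanSingleton R⁰ 1 * A)))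
      (iInf₂_le 1 ⟨one_ne_zero, by rwa [spanSingleton_one, one_mul]⟩)
  rw [show eStar 𝒜 K sf A = ⟨_, hfrac⟩ from dif_pos hfrac]
  change x ∈ eStarSub 𝒜 K sf A ↔ _
  simp only [eStarSub, Submodule.mem_iInf, mem_coe]
  exact ⟨fun h z hz hzA => h z ⟨hz, hzA⟩, fun h z hz => h z hz.1 hz.2⟩

lemma eStar_le_map_Cfrac {A : FractionalIdeal R⁰ K} (hA : A ≤ 1) :
    eStar 𝒜 K sf A ≤ sf.toFun (Cfrac 𝒜 K A) := fun x hx => by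
  simpa using (mem_eStar_iff sf hA).mp hx 1 one_ne_zero (by rwa [spanSingleton_one, one_mul])

lemma le_eStar {A : FractionalIdeal R⁰ K} (hA0 : A ≠ 0) (hA : A ≤ 1) : A ≤ eStar 𝒜 K sf A := by
  intro x hx
  rw [mem_eStar_iff sf hA]
  intro z hz hzA
  set I := idealOf K (spanSingleton R⁰ z * A)
  have hI : (I : FractionalIdeal R⁰ K) = spanSingleton R⁰ z * A := coeIdeal_idealOf hzA
  have hI0 : homC 𝒜 I ≠ ⊥ := homC_ne_bot fun h => mul_ne_zero_of_ne_zero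
    (spanSingleton_eq_zero_iff.not.mpr hz) hA0 (by rw [← hI, h, coeIdeal_bot])
  have hzx : z * x ∈ sf.toFun (Cfrac 𝒜 K (spanSingleton R⁰ z * A)) := by
    refine sf.le_star _ (coeIdeal_ne_zero.mpr hI0) (isHomFrac_coeIdeal (isHomogeneous_homC 𝒜 I)) ?_
    refine (coeIdeal_le_coeIdeal K).mpr (le_homC 𝒜 I) ?_
    rw [hI]
    exact mul_mem_mul (mem_spanSingleton_self _ z) hx
  simpa [inv_mul_cancel_left₀ hz] using mul_mem_mul (mem_spanSingleton_self _ z⁻¹) hzx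

lemma subset_finTypeSet_eStar {A : FractionalIdeal R⁰ K} (hA0 : A ≠ 0) (hA : A ≤ 1) :
    {x | x ∈ A} ⊆ finTypeSet K (eStar 𝒜 K sf) A := by
  intro x hx
  obtain ⟨y, hy, hy0⟩ := exists_mem_ne_zero hA0
  set B := spanSingleton R⁰ x ⊔ spanSingleton R⁰ y
  have hBA : B ≤ A := sup_le (spanSingleton_le_iff_mem.mpr hx) (spanSingleton_le_iff_mem.mpr hy)
  have hB0 : B ≠ 0 :=
    ne_zero_of_mem ((le_sup_right : spanSingleton R⁰ y ≤ B) (mem_spanSingleton_self _ y)) hy0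
  refine Set.mem_iUnion₂.mpr ⟨B, ⟨hB0, hBA, ?_⟩, le_eStar sf hB0 (hBA.trans hA)
    ((le_sup_left : spanSingleton R⁰ x ≤ B) (mem_spanSingleton_self _ x))⟩
  rw [coe_sup, coe_spanSingleton, coe_spanSingleton]
  exact (Submodule.fg_span_singleton x).sup (Submodule.fg_span_singleton y)

end EStar

section KeyLemma

variable {Γ : Type*} [AddCommMonoid Γ] [LinearOrder Γ] [IsOrderedCancelAddMonoid Γ]
  [DecidableEq Γ] {R : Type*} [CommRing R] [IsDomain R] {𝒜 : Γ → AddSubgroup R} [GradedRing 𝒜]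
  {K : Type*} [Field K] [Algebra R K] [IsFractionRing R K] (sf : HomStarOp 𝒜 K)

lemma mem_map_Cfrac_spanSingleton_mul {J : Ideal R} (hJ : J.FG) {a : R} (haJ : a ∈ J)
    (ha : SetLike.IsHomogeneousElem 𝒜 a) (ha0 : a ≠ 0) (h1 : (1 : K) ∈ sf.toFun ↑(homC 𝒜 J))
    {z : K} (hz : z ≠ 0) (hzJ : spanSingleton R⁰ z * J ≤ 1) :
    z ∈ sf.toFun (Cfrac 𝒜 K (spanSingleton R⁰ z * J)) := by
  -- With `w = za ∈ R`, Dedekind–Mertens gives `c(w) C(J)ᴺ ⊆ a C(zJ)`, and `z ∈ a⁻¹ c(w)`.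
  obtain ⟨s, rfl⟩ := hJ
  obtain ⟨δ, haδ⟩ := ha
  set I := idealOf K (spanSingleton R⁰ z * ((Ideal.span s : Ideal R) : FractionalIdeal R⁰ K))
  have hint : ∀ f ∈ Ideal.span s, ∃ v ∈ I, algebraMap R K v = z * algebraMap R K f := fun f hf =>
    exists_mem_idealOf_of_mem hzJ (mul_mem_mul (mem_spanSingleton_self R⁰ z)
      (mem_coeIdeal_of_mem R⁰ hf))
  obtain ⟨w, hwI, hw⟩ := hint a haJ
  have ha' : algebraMap R K a ≠ 0 := by simpa using ha0
  have hw0 : w ≠ 0 := by rintro rfl; simp_all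
  have hsX : ∀ f ∈ s, ∃ v ∈ homC 𝒜 I, f * w = a * v := by
    intro f hf
    obtain ⟨v, hvI, hv⟩ := hint f (Ideal.subset_span hf)
    refine ⟨v, le_homC 𝒜 I hvI, IsFractionRing.injective R K ?_⟩
    simp only [map_mul, hv, hw]
    ring
  set N := s.card * ((gradedSupport 𝒜 w).card + 1) + 1
  have hQ0 : homC 𝒜 (Ideal.span s) ≠ ⊥ :=
    homC_ne_bot fun h => ha0 (by rwa [h, Ideal.mem_bot] at haJ)
  have hX0 : homC 𝒜 I ≠ ⊥ := homC_ne_bot fun h => hw0 (by rwa [h, Ideal.mem_bot] at hwI)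
  set A := spanSingleton R⁰ (algebraMap R K a)⁻¹ * ↑(gradedContent 𝒜 w)
  have hzA : z ∈ A := by
    rw [show z = (algebraMap R K a)⁻¹ * algebraMap R K w by
      rw [hw, mul_comm z, inv_mul_cancel_left₀ ha']]
    exact mul_mem_mul (mem_spanSingleton_self _ _)
      (mem_coeIdeal_of_mem _ (mem_gradedContent_self 𝒜 w))
  have hAX : A * ↑(homC 𝒜 (Ideal.span s) ^ N) ≤ (homC 𝒜 I : FractionalIdeal R⁰ K) := by
    rw [mul_assoc, ← coeIdeal_mul]
    exact spanSingleton_inv_mul_coeIdeal_le ha0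
      (gradedContent_mul_homC_span_pow_le haδ (isHomogeneous_homC 𝒜 I) hsX)
  have hA : IsHomFrac 𝒜 K A := isHomFrac_spanSingleton_mul
    (by simpa using isHomElem_div (K := K) (SetLike.isHomogeneousElem_one 𝒜) ⟨δ, haδ⟩ ha0)
    (isHomFrac_coeIdeal (isHomogeneous_gradedContent 𝒜 w))
  exact sf.le_map_of_mul_le (ne_zero_of_mem hzA hz) hA (coeIdeal_ne_zero.mpr (pow_ne_zero N hQ0))
    (isHomFrac_coeIdeal ((isHomogeneous_homC 𝒜 _).pow N))
    (sf.one_mem_map_coeIdeal_pow hQ0 (isHomogeneous_homC 𝒜 _) h1 N)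
    (coeIdeal_ne_zero.mpr hX0) (isHomFrac_coeIdeal (isHomogeneous_homC 𝒜 I)) hAX hzA

lemma one_mem_eStar {J : Ideal R} (hJ : J.FG) {a : R} (haJ : a ∈ J)
    (ha : SetLike.IsHomogeneousElem 𝒜 a) (ha0 : a ≠ 0) (h1 : (1 : K) ∈ sf.toFun ↑(homC 𝒜 J)) :
    (1 : K) ∈ eStar 𝒜 K sf ↑J := by
  refine (mem_eStar_iff sf coeIdeal_le_one).mpr fun z hz hzJ => ?_
  simpa [inv_mul_cancel₀ hz] using mul_mem_mul (mem_spanSingleton_self R⁰ z⁻¹)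
    (mem_map_Cfrac_spanSingleton_mul sf hJ haJ ha ha0 h1 hz hzJ)

end KeyLemma

section StarFinHomC

variable {Γ : Type*} [AddCommMonoid Γ] [LinearOrder Γ] [IsOrderedCancelAddMonoid Γ]
  [DecidableEq Γ] {R : Type*} [CommRing R] [IsDomain R] {𝒜 : Γ → AddSubgroup R} [GradedRing 𝒜]
  {K : Type*} [Field K] [Algebra R K] [IsFractionRing R K] (sf : HomStarOp 𝒜 K)

/-- `C(M)^{⋆_f} ∩ R`, the union of the `C^⋆ ∩ R` over finitely generated homogeneous
nonzero `C ⊆ C(M)`. -/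
def starFinHomC (M : Ideal R) : Ideal R :=
  ⨆ C : fgHomBelow 𝒜 (homC 𝒜 M), idealOf K (sf.toFun C)

lemma homC_le_starFinHomC (M : Ideal R) : homC 𝒜 M ≤ starFinHomC sf M := by
  rw [homC_eq_iSup_gradedContent]
  refine iSup_le fun ⟨f, hf⟩ => ?_
  rcases eq_or_ne f 0 with rfl | hf0
  · exact gradedContent_le_iff.mpr fun i => by simp
  · exact (sf.le_idealOf_map (gradedContent_mem_fgHomBelow hf hf0).1
      (isHomogeneous_gradedContent 𝒜 f)).trans
      (le_iSup (fun C : fgHomBelow 𝒜 (homC 𝒜 M) => idealOf K (sf.toFun C))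
        ⟨_, gradedContent_mem_fgHomBelow hf hf0⟩)

lemma isHomogeneous_starFinHomC (M : Ideal R) : (starFinHomC sf M).IsHomogeneous 𝒜 :=
  Ideal.IsHomogeneous.iSup fun C => isHomogeneous_idealOf
    (sf.hom _ (coeIdeal_ne_zero.mpr C.2.1) (isHomFrac_coeIdeal C.2.2.2.1))

lemma exists_le_idealOf_map_of_fg {M : Ideal R} (hM : M ≠ ⊥) {I : Ideal R} (hI : I.FG)
    (hIN : I ≤ starFinHomC sf M) :
    ∃ C ∈ fgHomBelow 𝒜 (homC 𝒜 M), I ≤ idealOf K (sf.toFun C) := by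
  obtain ⟨f, hfM, hf0⟩ := Submodule.exists_mem_ne_zero_of_ne_bot hM
  have hdir : Directed (· ≤ ·) fun C : fgHomBelow 𝒜 (homC 𝒜 M) => idealOf K (sf.toFun C) := by
    intro C D
    have hCD := sup_mem_fgHomBelow C.2 D.2
    exact ⟨⟨_, hCD⟩,
      idealOf_mono (sf.map_coeIdeal_mono C.2.1 C.2.2.2.1 hCD.2.2.1 le_sup_left),
      idealOf_mono (sf.map_coeIdeal_mono D.2.1 D.2.2.2.1 hCD.2.2.1 le_sup_right)⟩
  obtain ⟨_, ⟨C, rfl⟩, hIC⟩ :=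
    (CompleteLattice.isCompactElement_iff_le_of_directed_sSup_le _ I).mp
      ((Submodule.fg_iff_compact I).mp hI) _ (Set.range_nonempty_iff_nonempty.mpr
        ⟨⟨_, gradedContent_mem_fgHomBelow hfM hf0⟩⟩) hdir.directedOn_range hIN
  exact ⟨C, C.2, hIC⟩

lemma finTypeSet_eStar_starFinHomC_eq {M : Ideal R} (hM : M ≠ ⊥) :
    finTypeSet K (eStar 𝒜 K sf) (starFinHomC sf M : FractionalIdeal R⁰ K) =
      {x | x ∈ (starFinHomC sf M : FractionalIdeal R⁰ K)} := by
  have hN0 : starFinHomC sf M ≠ ⊥ := fun h =>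
    hM (eq_bot_iff.mpr (h ▸ (le_homC 𝒜 M).trans (homC_le_starFinHomC sf M)))
  refine (Set.Subset.antisymm ?_ (subset_finTypeSet_eStar sf (coeIdeal_ne_zero.mpr hN0)
    coeIdeal_le_one))
  intro x hx
  obtain ⟨B, ⟨hB0, hBN, hBfg⟩, hxB⟩ := Set.mem_iUnion₂.mp hx
  set I := idealOf K B
  have hIB : (I : FractionalIdeal R⁰ K) = B := coeIdeal_idealOf (hBN.trans coeIdeal_le_one)
  have hIN : I ≤ starFinHomC sf M := (coeIdeal_le_coeIdeal K).mp (hIB ▸ hBN)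
  have hI0 : homC 𝒜 I ≠ ⊥ := homC_ne_bot fun h => hB0 (by rw [← hIB, h, coeIdeal_bot])
  have hIfg : (homC 𝒜 I).FG :=
    fg_homC ((coeIdeal_fg R⁰ (IsFractionRing.injective R K) I).mp (hIB ▸ hBfg))
  obtain ⟨C, hCM, hIC⟩ := exists_le_idealOf_map_of_fg sf hM hIfg
    (homC_le_of_le hIN (isHomogeneous_starFinHomC sf M))
  have hC0 : C ≠ ⊥ := hCM.1
  have hC : C.IsHomogeneous 𝒜 := hCM.2.2.1
  have hxC : x ∈ sf.toFun C := sf.map_le_map_of_le (coeIdeal_ne_zero.mpr hI0)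
    (isHomFrac_coeIdeal (isHomogeneous_homC 𝒜 I)) (coeIdeal_ne_zero.mpr hC0)
    (isHomFrac_coeIdeal hC) (coeIdeal_le_iff_le_idealOf.mpr hIC)
    (eStar_le_map_Cfrac sf (hBN.trans coeIdeal_le_one) hxB)
  obtain ⟨r, hr, rfl⟩ := exists_mem_idealOf_of_mem
    (sf.map_le_one (coeIdeal_ne_zero.mpr hC0) (isHomFrac_coeIdeal hC) coeIdeal_le_one) hxC
  exact mem_coeIdeal_of_mem _
    (le_iSup (fun C : fgHomBelow 𝒜 (homC 𝒜 M) => idealOf K (sf.toFun C)) ⟨C, hCM⟩ hr)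

lemma one_mem_finTypeSet_eStar_of_starFinHomC_eq_top {M : Ideal R} {a : R} (haM : a ∈ M)
    (ha : SetLike.IsHomogeneousElem 𝒜 a) (ha0 : a ≠ 0) (hN : starFinHomC sf M = ⊤) :
    (1 : K) ∈ finTypeSet K (eStar 𝒜 K sf) (M : FractionalIdeal R⁰ K) := by
  have hM : M ≠ ⊥ := fun h => ha0 (by rwa [h, Ideal.mem_bot] at haM)
  obtain ⟨C, ⟨hC0, hCfg, hChom, hCM⟩, hC1⟩ := exists_le_idealOf_map_of_fg sf hM
    (Submodule.fg_span_singleton 1) (hN ▸ le_top)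
  obtain ⟨J₀, hJ₀M, hJ₀fg, hCJ₀⟩ := exists_fg_le_homC hCfg hCM
  set J := J₀ ⊔ Ideal.span {a}
  have haJ : a ∈ J := Ideal.mem_sup_right (Ideal.mem_span_singleton_self a)
  have hJ0 : J ≠ ⊥ := fun h => ha0 (by rwa [h, Ideal.mem_bot] at haJ)
  have hJfg : J.FG := Submodule.FG.sup hJ₀fg (Submodule.fg_span_singleton a)
  have h1J : (1 : K) ∈ sf.toFun ↑(homC 𝒜 J) :=
    sf.map_coeIdeal_mono hC0 hChom (isHomogeneous_homC 𝒜 J) (hCJ₀.trans (homC_mono le_sup_left))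
      (by simpa using mem_idealOf.mp (hC1 (Ideal.mem_span_singleton_self 1)))
  refine Set.mem_iUnion₂.mpr ⟨J, ⟨coeIdeal_ne_zero.mpr hJ0, (coeIdeal_le_coeIdeal K).mpr
    (sup_le hJ₀M ((Ideal.span_singleton_le_iff_mem _).mpr haM)), ?_⟩,
    one_mem_eStar sf hJfg haJ ha ha0 h1J⟩
  exact (coeIdeal_fg R⁰ (IsFractionRing.injective R K) J).mpr hJfg

end StarFinHomC

theorem stmt_10_general
    {Γ : Type*} [AddCommMonoid Γ] [LinearOrder Γ] [IsOrderedCancelAddMonoid Γ] [DecidableEq Γ]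
    {R : Type*} [CommRing R] [IsDomain R]
    (𝒜 : Γ → AddSubgroup R) [GradedRing 𝒜]
    (K : Type*) [Field K] [Algebra R K] [IsFractionRing R K]
    (sf : HomStarOp 𝒜 K)
    (M : Ideal R) (hM0 : M ≠ 0) (hMtop : M ≠ ⊤)
    (hMstar : finTypeSet K (eStar 𝒜 K sf) (↑M : FractionalIdeal (nonZeroDivisors R) K) =
      {x : K | x ∈ (↑M : FractionalIdeal (nonZeroDivisors R) K)})
    (hMmax : ∀ J : Ideal R, J ≠ 0 → J ≠ ⊤ →
      finTypeSet K (eStar 𝒜 K sf) (↑J : FractionalIdeal (nonZeroDivisors R) K) =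
        {x : K | x ∈ (↑J : FractionalIdeal (nonZeroDivisors R) K)} → M ≤ J → M = J)
    (hMH : ∃ a ∈ M, a ≠ 0 ∧ SetLike.IsHomogeneousElem 𝒜 a) :
    homC 𝒜 M = M := by
  obtain ⟨a, haM, ha0, ha⟩ := hMH
  have hMN : M ≤ starFinHomC sf M := (le_homC 𝒜 M).trans (homC_le_starFinHomC sf M)
  have hNtop : starFinHomC sf M ≠ ⊤ := fun hN => hMtop <| (Ideal.eq_top_iff_one M).mpr <| by
    simpa [hMstar] using one_mem_finTypeSet_eStar_of_starFinHomC_eq_top sf haM ha ha0 hN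
  have hNM : M = starFinHomC sf M := hMmax _ (ne_bot_of_le_ne_bot hM0 hMN) hNtop
    (finTypeSet_eStar_starFinHomC_eq sf hM0) hMN
  exact le_antisymm ((homC_le_starFinHomC sf M).trans hNM.ge) (le_homC 𝒜 M)

/-- every maximal `(e(⋆_f))_f`-ideal of `R` meeting `H` is homogeneous. -/
theorem stmt_10
    {Γ : Type*} [AddCommMonoid Γ] [LinearOrder Γ] [IsOrderedCancelAddMonoid Γ] [DecidableEq Γ]
    {R : Type*} [CommRing R] [IsDomain R]
    (𝒜 : Γ → AddSubgroup R) [GradedRing 𝒜]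
    (K : Type*) [Field K] [Algebra R K] [IsFractionRing R K]
    (s sf : HomStarOp 𝒜 K)
    (hsf : ∀ A : FractionalIdeal (nonZeroDivisors R) K, A ≠ 0 → IsHomFrac 𝒜 K A →
      {x : K | x ∈ sf.toFun A} = homFinTypeSet 𝒜 K s.toFun A)
    (M : Ideal R) (hM0 : M ≠ 0) (hMtop : M ≠ ⊤)
    (hMstar : finTypeSet K (eStar 𝒜 K sf) (↑M : FractionalIdeal (nonZeroDivisors R) K) =
      {x : K | x ∈ (↑M : FractionalIdeal (nonZeroDivisors R) K)})
    (hMmax : ∀ J : Ideal R, J ≠ 0 → J ≠ ⊤ →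
      finTypeSet K (eStar 𝒜 K sf) (↑J : FractionalIdeal (nonZeroDivisors R) K) =
        {x : K | x ∈ (↑J : FractionalIdeal (nonZeroDivisors R) K)} → M ≤ J → M = J)
    (hMH : ∃ a ∈ M, a ≠ 0 ∧ SetLike.IsHomogeneousElem 𝒜 a) :
    homC 𝒜 M = M :=
  stmt_10_general 𝒜 K sf M hM0 hMtop hMstar hMmax hMH
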